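/- Let S be an inverse semigroup and let α : S → S be a premorphism that preserves the heap operation, i.e. α(a*b⁻¹*c) = α(a)*(α(b))⁻¹*α(c) for all a, b, c ∈ S. Then α is a semigroup homomorphism: α(a*c) = α(a)*α(c) for all a, c ∈ S. -/

import Mathlib

/-!
Put `e = c * c⁻¹`. Heap preservation gives `α (a * c) = α (a * e⁻¹ * c) = α a * (α e)⁻¹ * α c`,
and the premorphism inequality `α c = α (e * c) ≤ α e * α c` forces `α c ≤ (α e)⁻¹ * α c`:
inverting gives `(α c)⁻¹ ≤ (α c)⁻¹ * (α e)⁻¹`, which is an equality because `x ≤ y` means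
`x = x * x⁻¹ * y`.
Hence `α a * α c ≤ α (a * c)`, and the premorphism inequality for `a, c` gives the reverse.
-/

/-- An inverse semigroup: a semigroup in which every element `a` has a
(unique) inverse `a⁻¹` with `a * a⁻¹ * a = a` and `a⁻¹ * a * a⁻¹ = a⁻¹`. -/
class InverseSemigroup (S : Type*) extends Semigroup S, Inv S where
  mul_inv_mul : ∀ a : S, a * a⁻¹ * a = a
  inv_mul_inv : ∀ a : S, a⁻¹ * a * a⁻¹ = a⁻¹
  inv_unique : ∀ a b : S, a * b * a = a → b * a * b = b → b = a⁻¹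

/-- The natural partial order on an inverse semigroup:
`a ≤ b` iff `a = e * b` for some idempotent `e`. -/
def npo {S : Type*} [InverseSemigroup S] (a b : S) : Prop :=
  ∃ e : S, e * e = e ∧ a = e * b

/-- A premorphism of inverse semigroups: `θ (a * b) ≤ θ a * θ b` in the
natural partial order of the codomain. -/
def IsPremorphism {S T : Type*} [InverseSemigroup S] [InverseSemigroup T]
    (θ : S → T) : Prop :=
  ∀ a b : S, npo (θ (a * b)) (θ a * θ b)

namespace InverseSemigroup

variable {S : Type*} [InverseSemigroup S]

theorem inv_inv (a : S) : a⁻¹⁻¹ = a :=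
  (inv_unique a⁻¹ a (inv_mul_inv a) (mul_inv_mul a)).symm

theorem isIdempotentElem_mul_inv_self (a : S) : IsIdempotentElem (a * a⁻¹) := by
  change a * a⁻¹ * (a * a⁻¹) = a * a⁻¹
  rw [← mul_assoc, mul_inv_mul]

theorem isIdempotentElem_inv_mul_self (a : S) : IsIdempotentElem (a⁻¹ * a) := by
  simpa only [inv_inv] using isIdempotentElem_mul_inv_self a⁻¹

theorem inv_eq_self_of_isIdempotentElem {e : S} (he : IsIdempotentElem e) : e⁻¹ = e := by
  have h : e * e * e = e := by rw [he.eq, he.eq]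
  exact (inv_unique e e h h).symm

theorem isIdempotentElem_mul {e f : S} (he : IsIdempotentElem e) (hf : IsIdempotentElem f) :
    IsIdempotentElem (e * f) := by
  set x := (e * f)⁻¹ with hx
  -- `f * x * e` is also an inverse of `e * f`, so it equals `x`; this makes `x` idempotent.
  have hfxe : f * x * e = x := by
    refine inv_unique (e * f) (f * x * e) ?_ ?_
    · calc e * f * (f * x * e) * (e * f) = e * (f * f) * x * (e * e) * f := by
            simp only [mul_assoc]
        _ = e * f * x * (e * f) := by rw [he.eq, hf.eq]; simp only [mul_assoc]
        _ = e * f := mul_inv_mul _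
    · calc f * x * e * (e * f) * (f * x * e) = f * (x * ((e * e) * (f * f)) * x) * e := by
            simp only [mul_assoc]
        _ = f * x * e := by rw [he.eq, hf.eq, inv_mul_inv]
  have hxx : IsIdempotentElem x := by
    calc x * x = f * x * e * (f * x * e) := by rw [hfxe]
      _ = f * (x * (e * f) * x) * e := by simp only [mul_assoc]
      _ = x := by rw [hx, inv_mul_inv, ← hx, hfxe]
  have hefx : e * f = x := by rw [← inv_eq_self_of_isIdempotentElem hxx, hx, inv_inv]
  rwa [hefx]

theorem commute_of_isIdempotentElem {e f : S} (he : IsIdempotentElem e)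
    (hf : IsIdempotentElem f) : Commute e f := by
  have hef := isIdempotentElem_mul he hf
  have hfe := isIdempotentElem_mul hf he
  have hfe_inv : f * e = (e * f)⁻¹ := by
    refine inv_unique (e * f) (f * e) ?_ ?_
    · calc e * f * (f * e) * (e * f) = e * (f * f) * (e * e) * f := by simp only [mul_assoc]
        _ = e * f := by rw [he.eq, hf.eq, mul_assoc (e * f), hef.eq]
    · calc f * e * (e * f) * (f * e) = f * (e * e) * (f * f) * e := by simp only [mul_assoc]
        _ = f * e := by rw [he.eq, hf.eq, mul_assoc (f * e), hfe.eq]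
  exact (hfe_inv.trans (inv_eq_self_of_isIdempotentElem hef)).symm

theorem mul_inv_rev (a b : S) : (a * b)⁻¹ = b⁻¹ * a⁻¹ := by
  have hcomm : Commute (b * b⁻¹) (a⁻¹ * a) :=
    commute_of_isIdempotentElem (isIdempotentElem_mul_inv_self b)
      (isIdempotentElem_inv_mul_self a)
  refine (inv_unique (a * b) (b⁻¹ * a⁻¹) ?_ ?_).symm
  · calc a * b * (b⁻¹ * a⁻¹) * (a * b) = a * ((b * b⁻¹) * (a⁻¹ * a)) * b := by
          simp only [mul_assoc]
      _ = (a * a⁻¹ * a) * (b * b⁻¹ * b) := by rw [hcomm.eq]; simp only [mul_assoc]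
      _ = a * b := by rw [mul_inv_mul, mul_inv_mul]
  · calc b⁻¹ * a⁻¹ * (a * b) * (b⁻¹ * a⁻¹) = b⁻¹ * ((a⁻¹ * a) * (b * b⁻¹)) * a⁻¹ := by
          simp only [mul_assoc]
      _ = (b⁻¹ * b * b⁻¹) * (a⁻¹ * a * a⁻¹) := by rw [← hcomm.eq]; simp only [mul_assoc]
      _ = b⁻¹ * a⁻¹ := by rw [inv_mul_inv, inv_mul_inv]

theorem isIdempotentElem_mul_mul_inv {e : S} (he : IsIdempotentElem e) (y : S) :
    IsIdempotentElem (y * e * y⁻¹) := by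
  have hcomm := commute_of_isIdempotentElem he (isIdempotentElem_inv_mul_self y)
  calc y * e * y⁻¹ * (y * e * y⁻¹) = y * (e * (y⁻¹ * y)) * e * y⁻¹ := by simp only [mul_assoc]
    _ = (y * y⁻¹ * y) * (e * e) * y⁻¹ := by rw [hcomm.eq]; simp only [mul_assoc]
    _ = y * e * y⁻¹ := by rw [mul_inv_mul, he.eq]

theorem mul_mul_inv_mul_of_isIdempotentElem {e : S} (he : IsIdempotentElem e) (y : S) :
    y * e * y⁻¹ * y = y * e := by
  have hcomm := commute_of_isIdempotentElem he (isIdempotentElem_inv_mul_self y)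
  rw [mul_assoc, mul_assoc, hcomm.eq, ← mul_assoc, ← mul_assoc, mul_inv_mul]

theorem mul_inv_mul_mul_of_isIdempotentElem {e : S} (he : IsIdempotentElem e) (y : S) :
    y * (y⁻¹ * e * y) = e * y := by
  have hcomm := commute_of_isIdempotentElem he (isIdempotentElem_mul_inv_self y)
  rw [← mul_assoc, ← mul_assoc, ← hcomm.eq, mul_assoc, mul_inv_mul]

theorem npo_iff_exists_eq_mul_right {x y : S} :
    npo x y ↔ ∃ f : S, IsIdempotentElem f ∧ x = y * f := by
  constructor
  · rintro ⟨e, he, rfl⟩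
    refine ⟨y⁻¹ * e * y, by simpa only [inv_inv] using isIdempotentElem_mul_mul_inv he y⁻¹, ?_⟩
    exact (mul_inv_mul_mul_of_isIdempotentElem he y).symm
  · rintro ⟨f, hf, rfl⟩
    exact ⟨y * f * y⁻¹, isIdempotentElem_mul_mul_inv hf y,
      (mul_mul_inv_mul_of_isIdempotentElem hf y).symm⟩

theorem npo_antisymm {x y : S} (hxy : npo x y) (hyx : npo y x) : x = y := by
  obtain ⟨e, he, rfl⟩ := hxy
  obtain ⟨f, hf, hy⟩ := hyx
  have hfy : f * y = y := by rw [hy, ← mul_assoc, hf]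
  calc e * y = e * (f * y) := by rw [hfy]
    _ = f * (e * y) := by
        rw [← mul_assoc, (commute_of_isIdempotentElem he hf).eq, mul_assoc]
    _ = y := hy.symm

theorem npo_inv {x y : S} (h : npo x y) : npo x⁻¹ y⁻¹ := by
  obtain ⟨e, he, rfl⟩ := h
  exact npo_iff_exists_eq_mul_right.2
    ⟨e, he, by rw [mul_inv_rev, inv_eq_self_of_isIdempotentElem he]⟩

theorem npo_mul_left {x y : S} (z : S) (h : npo x y) : npo (z * x) (z * y) := by
  obtain ⟨f, hf, rfl⟩ := npo_iff_exists_eq_mul_right.1 h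
  exact npo_iff_exists_eq_mul_right.2 ⟨f, hf, (mul_assoc z y f).symm⟩

theorem eq_mul_inv_mul_of_npo {x y : S} (h : npo x y) : x = x * x⁻¹ * y := by
  obtain ⟨f, hf, rfl⟩ := npo_iff_exists_eq_mul_right.1 h
  have hcomm := commute_of_isIdempotentElem hf (isIdempotentElem_inv_mul_self y)
  calc y * f = y * (y⁻¹ * y) * f := by rw [← mul_assoc, mul_inv_mul]
    _ = y * (f * f) * (y⁻¹ * y) := by rw [hf.eq, mul_assoc y, ← hcomm.eq]; simp only [mul_assoc]
    _ = y * f * (f * y⁻¹) * y := by simp only [mul_assoc]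
    _ = y * f * (y * f)⁻¹ * y := by rw [mul_inv_rev, inv_eq_self_of_isIdempotentElem hf]

theorem npo_inv_mul_of_npo_mul {u k : S} (h : npo u (k * u)) : npo u (k⁻¹ * u) := by
  have hu_inv : u⁻¹ = u⁻¹ * k⁻¹ := by
    have h' := eq_mul_inv_mul_of_npo (npo_inv h)
    rwa [mul_inv_rev, inv_inv, ← mul_assoc, inv_mul_inv] at h'
  refine ⟨u * u⁻¹, isIdempotentElem_mul_inv_self u, ?_⟩
  calc u = u * u⁻¹ * u := (mul_inv_mul u).symm
    _ = u * u⁻¹ * (k⁻¹ * u) := by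
        conv_lhs => rw [hu_inv]
        simp only [mul_assoc]

end InverseSemigroup

open InverseSemigroup

theorem heap_preserving_premorphism_is_hom {S : Type*} [InverseSemigroup S]
    (α : S → S) (hα : IsPremorphism α)
    (hheap : ∀ a b c : S, α (a * b⁻¹ * c) = α a * (α b)⁻¹ * α c) :
    ∀ a c : S, α (a * c) = α a * α c := by
  intro a c
  have hα_ac : α (a * c) = α a * (α (c * c⁻¹))⁻¹ * α c := by
    have h := hheap a (c * c⁻¹) c
    rwa [inv_eq_self_of_isIdempotentElem (isIdempotentElem_mul_inv_self c), mul_assoc a,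
      mul_inv_mul] at h
  have hα_c : npo (α c) (α (c * c⁻¹) * α c) := by
    simpa only [mul_inv_mul] using hα (c * c⁻¹) c
  refine npo_antisymm (hα a c) ?_
  rw [hα_ac, mul_assoc (α a)]
  exact npo_mul_left _ (npo_inv_mul_of_npo_mul hα_c)
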